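/- arXiv:2301.10701 — 2 statements merged into one kernel-verified Lean document; each statement's English description precedes it below -/
import Mathlib

section
/- For any γ ∈ [0,1], q(γ) ≥ q(1/2) = p² > 0, where the lower bound q(γ) ≥ p² follows from the Gaussian correlation inequality applied to the two symmetric slabs. -/
/-!
Let `X, Y` be independent standard Gaussians. For `a² + b² = 1` the reflection
`(x, y) ↦ (a x + b y, b x - a y)` preserves the law of `(X, Y)`, as the characteristic functions
show. With `a = √γ`, `b = √(1 - γ)` it carries `(a X + b Y, a X - b Y)` to `(X, ρ X + s Y)` where
`ρ = 2γ - 1` and `s = 2ab`, so `q(γ) = P(|X| ≤ κ, |ρ X + s Y| ≤ κ)`; for `γ = 1/2`, `ρ = 0` and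
this is `p²`. Conditioning on `X`, `q(γ) = E[f(X) g(X)]` with `f = 1{|·| ≤ κ}` and
`g(x) = P(|ρ x + s Y| ≤ κ)`. An interval of fixed length carries the more Gaussian mass the
closer its centre is to `0`, so `f` and `g` both decrease in `|x|`, and Chebyshev's association
inequality gives `q(γ) ≥ E[f] E[g] = p²`, because `ρ X + s Y` is again standard Gaussian.
-/

open MeasureTheory ProbabilityTheory
open scoped ENNReal

noncomputable def stdGauss : Measure ℝ := gaussianReal 0 1

/-- The pair probability function `q(γ)` for two independent standard Gaussians. -/
noncomputable def pairProb (κ γ : ℝ) : ℝ≥0∞ :=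
  (stdGauss.prod stdGauss) {z : ℝ × ℝ |
    |Real.sqrt γ * z.1 + Real.sqrt (1 - γ) * z.2| ≤ κ ∧
    |Real.sqrt γ * z.1 - Real.sqrt (1 - γ) * z.2| ≤ κ}

open scoped NNReal

lemma ENNReal.mul_add_mul_le_mul_add_mul {a b c d : ℝ≥0∞} (hab : a ≤ b) (hcd : c ≤ d) :
    a * d + b * c ≤ a * c + b * d := by
  obtain ⟨e, rfl⟩ := exists_add_of_le hcd
  calc a * (c + e) + b * c = a * e + (a * c + b * c) := by ring
    _ ≤ b * e + (a * c + b * c) := by gcongr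
    _ = a * c + b * (c + e) := by ring

theorem Monovary.lintegral_mul_lintegral_le_lintegral_mul {α : Type*} [MeasurableSpace α]
    {μ : Measure α} [IsProbabilityMeasure μ] {f g : α → ℝ≥0∞} (hf : Measurable f)
    (hg : Measurable g) (hfg : Monovary f g) :
    (∫⁻ x, f x ∂μ) * ∫⁻ x, g x ∂μ ≤ ∫⁻ x, f x * g x ∂μ := by
  have hpair : ∀ x y, f x * g y + f y * g x ≤ f x * g x + f y * g y := by
    intro x y
    rcases lt_or_ge (g x) (g y) with hlt | hle
    · exact ENNReal.mul_add_mul_le_mul_add_mul (hfg hlt) hlt.le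
    · rcases hle.lt_or_eq with hlt | heq
      · rw [add_comm (f x * g y), add_comm (f x * g x)]
        exact ENNReal.mul_add_mul_le_mul_add_mul (hfg hlt) hlt.le
      · rw [heq]
  refine (ENNReal.mul_le_mul_iff_right two_ne_zero ENNReal.ofNat_ne_top).1 ?_
  calc 2 * ((∫⁻ x, f x ∂μ) * ∫⁻ x, g x ∂μ)
      = ∫⁻ x, ∫⁻ y, (f x * g y + f y * g x) ∂μ ∂μ := by
        simp_rw [lintegral_add_left' ((hg.const_mul _).aemeasurable), lintegral_const_mul _ hg,
          lintegral_mul_const _ hf]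
        rw [lintegral_add_left (hf.mul_const _), lintegral_mul_const _ hf,
          lintegral_const_mul _ hg, two_mul]
    _ ≤ ∫⁻ x, ∫⁻ y, (f x * g x + f y * g y) ∂μ ∂μ :=
        lintegral_mono fun x ↦ lintegral_mono fun y ↦ hpair x y
    _ = 2 * ∫⁻ x, f x * g x ∂μ := by
        simp_rw [lintegral_add_left measurable_const, lintegral_const, measure_univ, mul_one]
        rw [lintegral_add_right _ measurable_const, lintegral_const, measure_univ, mul_one,
          two_mul]

lemma integral_window_le_of_le {φ : ℝ → ℝ} (hφ : Integrable φ)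
    (hφ_mono : ∀ x y, |x| ≤ |y| → φ y ≤ φ x) {L c c' : ℝ} (hL : 0 ≤ L) (hc : 0 ≤ c)
    (hcc' : c ≤ c') :
    ∫ x in (c' - L)..(c' + L), φ x ≤ ∫ x in (c - L)..(c + L), φ x := by
  have hint : ∀ u v : ℝ, IntervalIntegrable φ volume u v := fun _ _ ↦ hφ.intervalIntegrable
  -- translating by `2L` moves `[c - L, c' - L]` onto `[c + L, c' + L]`, away from the origin
  have hshift : ∫ x in (c + L)..(c' + L), φ x ≤ ∫ x in (c - L)..(c' - L), φ x := by
    rw [show c + L = c - L + 2 * L by ring, show c' + L = c' - L + 2 * L by ring,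
      ← intervalIntegral.integral_comp_add_right]
    refine intervalIntegral.integral_mono_on (by linarith)
      (hφ.comp_add_right _).intervalIntegrable (hint _ _) fun x hx ↦ hφ_mono _ _ ?_
    rw [← sq_le_sq]
    nlinarith [hx.1]
  have h₁ := intervalIntegral.integral_add_adjacent_intervals (hint (c - L) (c + L))
    (hint _ (c' + L))
  have h₂ := intervalIntegral.integral_add_adjacent_intervals (hint (c - L) (c' - L))
    (hint _ (c' + L))
  linarith

lemma integral_window_le_of_abs_le {φ : ℝ → ℝ} (hφ : Integrable φ)
    (hφ_mono : ∀ x y, |x| ≤ |y| → φ y ≤ φ x) {L c c' : ℝ} (hL : 0 ≤ L) (h : |c| ≤ |c'|) :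
    ∫ x in (c' - L)..(c' + L), φ x ≤ ∫ x in (c - L)..(c + L), φ x := by
  have hwindow_abs :
      ∀ m : ℝ, ∫ x in (m - L)..(m + L), φ x = ∫ x in (|m| - L)..(|m| + L), φ x := by
    intro m
    rcases abs_choice m with hm | hm
    · rw [hm]
    · have heven : ∀ x, φ (-x) = φ x := fun x ↦
        le_antisymm (hφ_mono _ _ (abs_neg x).ge) (hφ_mono _ _ (abs_neg x).le)
      rw [hm, show -m - L = -(m + L) by ring, show -m + L = -(m - L) by ring,
        ← intervalIntegral.integral_comp_neg]
      simp_rw [heven]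
  rw [hwindow_abs c, hwindow_abs c']
  exact integral_window_le_of_le hφ hφ_mono hL (abs_nonneg c) h

lemma gaussianPDFReal_le_of_abs_le (v : ℝ≥0) {x y : ℝ} (h : |x| ≤ |y|) :
    gaussianPDFReal 0 v y ≤ gaussianPDFReal 0 v x := by
  simp only [gaussianPDFReal, sub_zero]
  gcongr _ * Real.exp (-?_ / _)
  exact sq_le_sq.2 h

lemma gaussianReal_Icc_le_of_abs_le (v : ℝ≥0) {L m m' : ℝ} (hL : 0 ≤ L) (h : |m| ≤ |m'|) :
    gaussianReal m' v (Set.Icc (-L) L) ≤ gaussianReal m v (Set.Icc (-L) L) := by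
  rcases eq_or_ne v 0 with rfl | hv
  · simp only [gaussianReal_zero_var, Measure.dirac_apply' _ measurableSet_Icc]
    by_cases hm' : m' ∈ Set.Icc (-L) L
    · have hm : m ∈ Set.Icc (-L) L := by
        rw [Set.mem_Icc, ← abs_le] at hm' ⊢
        exact h.trans hm'
      simp [hm, hm']
    · simp [hm']
  have hwindow : ∀ m, gaussianReal m v (Set.Icc (-L) L)
      = ENNReal.ofReal (∫ x in (-m - L)..(-m + L), gaussianPDFReal 0 v x) := by
    intro m
    rw [← zero_add m, ← gaussianReal_map_add_const,
      Measure.map_apply (measurable_add_const m) measurableSet_Icc, Set.preimage_add_const_Icc,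
      gaussianReal_apply_eq_integral 0 hv, integral_Icc_eq_integral_Ioc,
      ← intervalIntegral.integral_of_le (by linarith), zero_add]
    congr 2 <;> ring
  rw [hwindow, hwindow]
  refine ENNReal.ofReal_le_ofReal (integral_window_le_of_abs_le
    (integrable_gaussianPDFReal 0 v) (fun x y ↦ gaussianPDFReal_le_of_abs_le v) hL ?_)
  rwa [abs_neg, abs_neg]

lemma gaussianReal_map_const_add_mul (m c d : ℝ) (v : ℝ≥0) :
    (gaussianReal m v).map (fun y ↦ c + d * y)
      = gaussianReal (d * m + c) (⟨d ^ 2, sq_nonneg d⟩ * v) := by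
  rw [show (fun y ↦ c + d * y) = (c + ·) ∘ (d * ·) from rfl,
    ← Measure.map_map (by fun_prop) (by fun_prop), gaussianReal_map_const_mul,
    gaussianReal_map_const_add]
  rfl

lemma gaussianReal_setOf_abs_le_pos (m : ℝ) {v : ℝ≥0} (hv : v ≠ 0) {κ : ℝ} (hκ : 0 < κ) :
    0 < gaussianReal m v {z | |z| ≤ κ} := by
  have hS : {z : ℝ | |z| ≤ κ} = Set.Icc (-κ) κ := by ext; simp [abs_le]
  refine pos_iff_ne_zero.2 fun h0 ↦ ?_
  have := gaussianReal_absolutelyContinuous' m hv h0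
  rw [hS, Real.volume_Icc, ENNReal.ofReal_eq_zero] at this
  linarith

lemma charFunDual_gaussianReal (m : ℝ) (v : ℝ≥0) (ℓ : StrongDual ℝ ℝ) :
    charFunDual (gaussianReal m v) ℓ = Complex.exp (ℓ m * Complex.I - v * ℓ 1 ^ 2 / 2) := by
  rw [charFunDual_eq_charFun_map_one, gaussianReal_map_continuousLinearMap, charFun_gaussianReal]
  simp only [Complex.ofReal_one, one_mul, NNReal.coe_mul, Real.coe_toNNReal _ (sq_nonneg _),
    Complex.ofReal_mul, Complex.ofReal_pow, one_pow, mul_one]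
  ring_nf

lemma measurePreserving_gaussianReal_prod {a b : ℝ} (hab : a ^ 2 + b ^ 2 = 1) (v : ℝ≥0) :
    MeasurePreserving (fun z : ℝ × ℝ ↦ (a * z.1 + b * z.2, b * z.1 - a * z.2))
      ((gaussianReal 0 v).prod (gaussianReal 0 v))
      ((gaussianReal 0 v).prod (gaussianReal 0 v)) := by
  let R : ℝ × ℝ →L[ℝ] ℝ × ℝ :=
    (a • ContinuousLinearMap.fst ℝ ℝ ℝ + b • ContinuousLinearMap.snd ℝ ℝ ℝ).prod
      (b • ContinuousLinearMap.fst ℝ ℝ ℝ - a • ContinuousLinearMap.snd ℝ ℝ ℝ)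
  have hR : ⇑R = fun z : ℝ × ℝ ↦ (a * z.1 + b * z.2, b * z.1 - a * z.2) := by
    ext z <;> simp [R]
  refine ⟨by fun_prop, ?_⟩
  rw [← hR]
  refine Measure.ext_of_charFunDual (funext fun L ↦ ?_)
  have hL : ∀ x y : ℝ, L (x, y) = x * L (1, 0) + y * L (0, 1) := fun x y ↦ by
    rw [show ((x, y) : ℝ × ℝ) = x • (1, 0) + y • (0, 1) by simp, map_add, map_smul, map_smul,
      smul_eq_mul, smul_eq_mul]
  simp only [charFunDual_map, charFunDual_prod, charFunDual_gaussianReal, ← Complex.exp_add]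
  congr 1
  simp only [ContinuousLinearMap.comp_apply, ContinuousLinearMap.inl_apply,
    ContinuousLinearMap.inr_apply, hR, map_zero]
  rw [hL, hL (a * 0 + b * 1)]
  have habℂ : (a : ℂ) ^ 2 + (b : ℂ) ^ 2 = 1 := by exact_mod_cast hab
  push_cast
  linear_combination (-(v : ℂ) / 2 * (L (1, 0) ^ 2 + L (0, 1) ^ 2)) * habℂ

lemma gaussianReal_prod_map_linear {ρ s : ℝ} (h : ρ ^ 2 + s ^ 2 = 1) (v : ℝ≥0) :
    ((gaussianReal 0 v).prod (gaussianReal 0 v)).map (fun w : ℝ × ℝ ↦ ρ * w.1 + s * w.2)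
      = gaussianReal 0 v := by
  have hR := (measurePreserving_gaussianReal_prod h v).map_eq
  rw [show (fun w : ℝ × ℝ ↦ ρ * w.1 + s * w.2)
      = Prod.fst ∘ fun z : ℝ × ℝ ↦ (ρ * z.1 + s * z.2, s * z.1 - ρ * z.2) from rfl,
    ← Measure.map_map measurable_fst (by fun_prop), hR, Measure.map_fst_prod, measure_univ,
    one_smul]

lemma gaussianReal_slab_le_of_abs_le (ρ s : ℝ) (v : ℝ≥0) {κ : ℝ} (hκ : 0 ≤ κ) {x y : ℝ}
    (h : |x| ≤ |y|) :
    gaussianReal 0 v {z | |ρ * y + s * z| ≤ κ} ≤ gaussianReal 0 v {z | |ρ * x + s * z| ≤ κ} := by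
  have hslab : ∀ x, gaussianReal 0 v {z | |ρ * x + s * z| ≤ κ}
      = gaussianReal (ρ * x) (⟨s ^ 2, sq_nonneg s⟩ * v) (Set.Icc (-κ) κ) := by
    intro x
    have hmap := gaussianReal_map_const_add_mul 0 (ρ * x) s v
    rw [mul_zero, zero_add] at hmap
    rw [← hmap, Measure.map_apply (by fun_prop) measurableSet_Icc]
    simp only [abs_le, Set.preimage, Set.mem_Icc]
  rw [hslab, hslab]
  exact gaussianReal_Icc_le_of_abs_le _ hκ (by rw [abs_mul, abs_mul]; gcongr)

lemma sq_le_gaussianReal_prod_slab_inter {ρ s : ℝ} (h : ρ ^ 2 + s ^ 2 = 1) (v : ℝ≥0) {κ : ℝ}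
    (hκ : 0 ≤ κ) :
    gaussianReal 0 v {z | |z| ≤ κ} ^ 2 ≤
      ((gaussianReal 0 v).prod (gaussianReal 0 v)) {w | |w.1| ≤ κ ∧ |ρ * w.1 + s * w.2| ≤ κ} := by
  set μ := gaussianReal 0 v
  set S : Set ℝ := {z | |z| ≤ κ}
  have hS : MeasurableSet S := measurableSet_le (by fun_prop) measurable_const
  have hslab : MeasurableSet {w : ℝ × ℝ | |ρ * w.1 + s * w.2| ≤ κ} :=
    measurableSet_le (by fun_prop) measurable_const
  let f : ℝ → ℝ≥0∞ := S.indicator 1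
  let g : ℝ → ℝ≥0∞ := fun x ↦ μ {y | |ρ * x + s * y| ≤ κ}
  have hfg : Monovary f g := by
    intro x y hlt
    have hyx : |y| ≤ |x| :=
      (not_le.1 fun hxy ↦ (gaussianReal_slab_le_of_abs_le ρ s v hκ hxy).not_gt hlt).le
    by_cases hx : x ∈ S
    · simp [f, hx, show y ∈ S from hyx.trans hx]
    · simp [f, hx]
  have hg_int : ∫⁻ x, g x ∂μ = μ S := calc
    ∫⁻ x, g x ∂μ = ((μ.prod μ).map fun w : ℝ × ℝ ↦ ρ * w.1 + s * w.2) S := by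
      rw [Measure.map_apply (by fun_prop) hS, Measure.prod_apply (hS.preimage (by fun_prop))]
      rfl
    _ = μ S := by rw [gaussianReal_prod_map_linear h v]
  have hT : MeasurableSet {w : ℝ × ℝ | |w.1| ≤ κ ∧ |ρ * w.1 + s * w.2| ≤ κ} :=
    (hS.preimage measurable_fst).inter hslab
  calc μ S ^ 2 = (∫⁻ x, f x ∂μ) * ∫⁻ x, g x ∂μ := by
        rw [lintegral_indicator_one hS, hg_int, sq]
    _ ≤ ∫⁻ x, f x * g x ∂μ :=
        hfg.lintegral_mul_lintegral_le_lintegral_mul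
          (measurable_const.indicator hS) (measurable_measure_prodMk_left hslab)
    _ = _ := by
        rw [Measure.prod_apply hT]
        refine lintegral_congr fun x ↦ ?_
        by_cases hx : |x| ≤ κ <;> simp [f, g, S, hx]

lemma pairProb_eq_prod_slab_inter {κ γ : ℝ} (hγ : γ ∈ Set.Icc (0 : ℝ) 1) :
    pairProb κ γ = ((gaussianReal 0 1).prod (gaussianReal 0 1))
      {w | |w.1| ≤ κ ∧ |(2 * γ - 1) * w.1 + 2 * √γ * √(1 - γ) * w.2| ≤ κ} := by
  set a := √γ
  set b := √(1 - γ)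
  have ha : a ^ 2 = γ := Real.sq_sqrt hγ.1
  have hb : b ^ 2 = 1 - γ := Real.sq_sqrt (by linarith [hγ.2])
  have hab : a ^ 2 + b ^ 2 = 1 := by rw [ha, hb]; ring
  have hT : MeasurableSet
      {w : ℝ × ℝ | |w.1| ≤ κ ∧ |(2 * γ - 1) * w.1 + 2 * a * b * w.2| ≤ κ} := by
    measurability
  rw [pairProb, stdGauss,
    ← (measurePreserving_gaussianReal_prod hab 1).measure_preimage hT.nullMeasurableSet]
  congr 1
  ext z
  simp only [Set.mem_ofPred_eq, Set.mem_preimage]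
  rw [show (2 * γ - 1) * (a * z.1 + b * z.2) + 2 * a * b * (b * z.1 - a * z.2)
      = a * z.1 - b * z.2 by
    linear_combination (-2 * (a * z.1 + b * z.2)) * ha + 2 * a * z.1 * hab]

theorem stmt3 (κ : ℝ) (hκ : 0 < κ) :
    pairProb κ (1/2) = (stdGauss {z : ℝ | |z| ≤ κ}) ^ 2 ∧
    (0 : ℝ≥0∞) < (stdGauss {z : ℝ | |z| ≤ κ}) ^ 2 ∧
    ∀ γ ∈ Set.Icc (0:ℝ) 1, (stdGauss {z : ℝ | |z| ≤ κ}) ^ 2 ≤ pairProb κ γ := by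
  rw [stdGauss]
  refine ⟨?_, ENNReal.pow_pos (gaussianReal_setOf_abs_le_pos 0 one_ne_zero hκ) 2, fun γ hγ ↦ ?_⟩
  · have hhalf : 2 * √(1 / 2 : ℝ) * √(1 - 1 / 2) = 1 := by
      rw [show (1 : ℝ) - 1 / 2 = 1 / 2 by norm_num, mul_assoc, Real.mul_self_sqrt (by norm_num)]
      norm_num
    rw [pairProb_eq_prod_slab_inter ⟨by norm_num, by norm_num⟩, hhalf, sq, ← Measure.prod_prod]
    congr 1
    ext w
    simp
  · rw [pairProb_eq_prod_slab_inter hγ]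
    refine sq_le_gaussianReal_prod_slab_inter ?_ 1 hκ.le
    rw [mul_pow, mul_pow, Real.sq_sqrt hγ.1, Real.sq_sqrt (by linarith [hγ.2])]
    ring
end

section
/- There is an absolute constant C such that for all n sufficiently large and all integers k with |k| ≤ √n · log n and (n+k)/2 ∈ ℤ, one has C(n, (n+k)/2) = (2^n √2 / √(π n)) · exp(-k²/(2n) ± n^{-1/2}), i.e., the ratio of the two sides is exp of a quantity bounded in absolute value by n^{-1/2}. -/
/-!
Write `m = n(1+t)/2` and `n - m = n(1-t)/2` with `t = k/n`. Stirling's formula with Robbins'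
remainder `0 ≤ log n! - (n log n - n + log(2πn)/2) ≤ 1/(12n)` turns `log C(n, m)` into
`n log 2 + log(2/(πn))/2 - (n/2)((1+t) log(1+t) + (1-t) log(1-t)) - log(1-t²)/2` up to `O(1/n)`.
Taylor expansion gives `(1+t) log(1+t) + (1-t) log(1-t) = t² + O(t⁴)` and `log(1-t²) = O(t²)`,
so the error in the exponent is `O((1 + k²/n + k⁴/n²)/n) = O(log⁴ n / n)`, which is below
`n^{-1/2}` for large `n`.
-/

open Real Filter Stirling
open scoped Nat

theorem log_stirlingSeq_le {n : ℕ} (hn : n ≠ 0) :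
    log (stirlingSeq n) ≤ log √π + 1 / (12 * n) := by
  obtain ⟨n, rfl⟩ := Nat.exists_eq_succ_of_ne_zero hn
  -- Robbins' bound makes `log (stirlingSeq k) - 1 / (12 k)` increasing, and its limit is `log √π`.
  set f : ℕ → ℝ := fun k ↦ log (stirlingSeq (k + 1)) - 1 / (12 * (k + 1 : ℕ))
  have hf : Monotone f := by
    refine monotone_nat_of_le_succ fun k ↦ ?_
    have := log_stirlingSeq_sdiff_le (k + 1)
    simp only [f]
    push_cast at this ⊢
    field_simp at this ⊢
    nlinarith
  have hlim : Tendsto f atTop (nhds (log √π - 0)) := by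
    refine Tendsto.sub ?_ ?_
    · exact ((continuousAt_log (by positivity)).tendsto.comp tendsto_stirlingSeq_sqrt_pi).comp
        (tendsto_add_atTop_nat 1)
    · refine ((tendsto_const_div_atTop_nhds_zero_nat (1 / 12 : ℝ)).comp
        (tendsto_add_atTop_nat 1)).congr fun k ↦ ?_
      simp only [Function.comp_apply]
      field_simp
  have := hf.ge_of_tendsto hlim n
  simp only [f, sub_zero] at this
  linarith

noncomputable def logStirling (x : ℝ) : ℝ := x * log x - x + log x / 2 + log (2 * π) / 2

theorem logStirling_le_log_factorial {n : ℕ} (hn : n ≠ 0) : logStirling n ≤ log n ! :=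
  le_log_factorial_stirling hn

theorem log_factorial_le_logStirling_add {n : ℕ} (hn : n ≠ 0) :
    log n ! ≤ logStirling n + 1 / (12 * n) := by
  have hn' : (0 : ℝ) < n := by positivity
  have := log_stirlingSeq_le hn
  rw [log_stirlingSeq_formula, log_sqrt pi_pos.le, log_mul two_ne_zero hn'.ne',
    log_div hn'.ne' (exp_pos 1).ne', log_exp] at this
  rw [logStirling, log_mul two_ne_zero pi_pos.ne']
  linarith

theorem abs_log_choose_sub_logStirling_le {n m : ℕ} (hm₀ : m ≠ 0) (hmn : m < n) :
    |log (n.choose m) - (logStirling n - logStirling m - logStirling ↑(n - m))| ≤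
      1 / (12 * m) + 1 / (12 * ↑(n - m)) := by
  have hnm : n - m ≠ 0 := by omega
  have hchoose : log (n.choose m) = log n ! - log m ! - log (n - m)! := by
    rw [Nat.cast_choose ℝ hmn.le, log_div (by positivity) (by positivity),
      log_mul (by positivity) (by positivity)]
    ring
  have hmn' : 1 / (12 * (n : ℝ)) ≤ 1 / (12 * m) := by gcongr
  rw [hchoose, abs_le]
  constructor <;> linarith [logStirling_le_log_factorial (n := n) (by omega),
    logStirling_le_log_factorial hm₀, logStirling_le_log_factorial hnm,
    log_factorial_le_logStirling_add (n := n) (by omega),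
    log_factorial_le_logStirling_add hm₀, log_factorial_le_logStirling_add hnm,
    show (0 : ℝ) ≤ 1 / (12 * ↑(n - m)) by positivity]

theorem abs_log_one_add_sub_le {x : ℝ} (hx : |x| ≤ 1 / 2) :
    |log (1 + x) - (x - x ^ 2 / 2 + x ^ 3 / 3)| ≤ 2 * x ^ 4 := by
  have h := abs_log_sub_add_sum_range_le (x := -x) (by rw [abs_neg]; linarith) 3
  simp only [Finset.sum_range_succ, Finset.sum_range_zero, abs_neg, sub_neg_eq_add] at h
  have hx4 : |x| ^ 4 = x ^ 4 := by rw [← abs_pow, abs_of_nonneg (by positivity)]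
  calc |log (1 + x) - (x - x ^ 2 / 2 + x ^ 3 / 3)| ≤ |x| ^ 4 / (1 - |x|) := by
        convert h using 2; push_cast; ring
    _ ≤ 2 * x ^ 4 := by
      rw [div_le_iff₀ (by linarith), hx4]
      nlinarith [abs_nonneg x, pow_nonneg (sq_nonneg x) 2]

theorem abs_log_one_sub_le {x : ℝ} (hx₀ : 0 ≤ x) (hx : x ≤ 1 / 2) : |log (1 - x)| ≤ 2 * x := by
  have h := abs_log_sub_add_sum_range_le (x := x) (by rw [abs_of_nonneg hx₀]; linarith) 0
  simp only [Finset.sum_range_zero, zero_add, pow_one, abs_of_nonneg hx₀] at h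
  calc |log (1 - x)| ≤ x / (1 - x) := h
    _ ≤ 2 * x := by rw [div_le_iff₀ (by linarith)]; nlinarith

theorem abs_one_add_mul_log_add_one_sub_mul_log_sub_sq_le {t : ℝ} (ht : |t| ≤ 1 / 2) :
    |(1 + t) * log (1 + t) + (1 - t) * log (1 - t) - t ^ 2| ≤ 5 * t ^ 4 := by
  have hplus := abs_log_one_add_sub_le ht
  have hminus := abs_log_one_add_sub_le (x := -t) (by rwa [abs_neg])
  rw [← sub_eq_add_neg] at hminus
  obtain ⟨htl, htu⟩ := abs_le.mp ht
  -- the cubic Taylor polynomials of `log (1 ± t)` already account for `t ^ 2 + 2 t ^ 4 / 3`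
  have key : (1 + t) * log (1 + t) + (1 - t) * log (1 - t) - t ^ 2 =
      2 * t ^ 4 / 3 + (1 + t) * (log (1 + t) - (t - t ^ 2 / 2 + t ^ 3 / 3))
        + (1 - t) * (log (1 - t) - (-t - (-t) ^ 2 / 2 + (-t) ^ 3 / 3)) := by ring
  rw [key]
  calc _ ≤ |2 * t ^ 4 / 3| + |(1 + t) * (log (1 + t) - (t - t ^ 2 / 2 + t ^ 3 / 3))|
        + |(1 - t) * (log (1 - t) - (-t - (-t) ^ 2 / 2 + (-t) ^ 3 / 3))| := abs_add_three _ _ _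
    _ ≤ 2 * t ^ 4 / 3 + (1 + t) * (2 * t ^ 4) + (1 - t) * (2 * (-t) ^ 4) := by
      rw [abs_of_nonneg (by positivity), abs_mul, abs_mul, abs_of_nonneg (by linarith : 0 ≤ 1 + t),
        abs_of_nonneg (by linarith : 0 ≤ 1 - t)]
      gcongr <;> linarith
    _ ≤ 5 * t ^ 4 := by nlinarith [pow_nonneg (sq_nonneg t) 2]

theorem logStirling_sub_logStirling_sub_logStirling {n t : ℝ} (hn : 0 < n) (ht : |t| < 1) :
    logStirling n - logStirling (n * (1 + t) / 2) - logStirling (n * (1 - t) / 2) =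
      n * log 2 + (log 2 - log (π * n)) / 2
        - n / 2 * ((1 + t) * log (1 + t) + (1 - t) * log (1 - t))
        - (log (1 + t) + log (1 - t)) / 2 := by
  obtain ⟨htl, htu⟩ := abs_lt.mp ht
  have hlog (s : ℝ) (hs : 0 < s) : log (n * s / 2) = log n + log s - log 2 := by
    rw [log_div (by positivity) two_ne_zero, log_mul hn.ne' hs.ne']
  simp only [logStirling]
  rw [hlog _ (by linarith), hlog _ (by linarith), log_mul two_ne_zero pi_pos.ne',
    log_mul pi_pos.ne' hn.ne']
  ring

theorem abs_log_choose_sub_gaussian_le {n m : ℕ} {k : ℤ} (hn : 0 < n) (hm : 2 * (m : ℤ) = n + k)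
    (hk : 2 * |(k : ℝ)| ≤ n) :
    |log (n.choose m) - (log (2 ^ n * √2 / √(π * n)) - (k : ℝ) ^ 2 / (2 * n))| ≤
      1 / n + (k : ℝ) ^ 2 / n ^ 2 + 5 * (k : ℝ) ^ 4 / (2 * n ^ 3) := by
  have hn' : (0 : ℝ) < n := by exact_mod_cast hn
  have hmR : 2 * (m : ℝ) = n + k := by exact_mod_cast hm
  obtain ⟨hkl, hku⟩ := abs_le.mp (show |(k : ℝ)| ≤ n / 2 by linarith)
  have hmn : m < n := by exact_mod_cast (show (m : ℝ) < n by linarith)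
  have hm₀ : m ≠ 0 := by rintro rfl; norm_num at hmR; linarith
  have hbR : ((n - m : ℕ) : ℝ) = n - m := by push_cast [hmn.le]; ring
  obtain ⟨t, htn⟩ : ∃ t : ℝ, (k : ℝ) = n * t := ⟨k / n, by field_simp⟩
  have ht : |t| ≤ 1 / 2 := by
    rw [htn, abs_mul, abs_of_pos hn'] at hk; nlinarith
  have hsplit := logStirling_sub_logStirling_sub_logStirling hn' (t := t) (by linarith [ht])
  rw [show n * (1 + t) / 2 = (m : ℝ) by linarith, show n * (1 - t) / 2 = ((n - m : ℕ) : ℝ) by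
    rw [hbR]; linarith] at hsplit
  have hlogA : log (2 ^ n * √2 / √(π * n)) = n * log 2 + (log 2 - log (π * n)) / 2 := by
    rw [log_div (by positivity) (by positivity), log_mul (by positivity) (by positivity), log_pow,
      log_sqrt (by positivity), log_sqrt (by positivity)]
    ring
  have htaylor := abs_one_add_mul_log_add_one_sub_mul_log_sub_sq_le ht
  have hlog_one_sub_sq : |log (1 + t) + log (1 - t)| ≤ 2 * t ^ 2 := by
    obtain ⟨htl, htu⟩ := abs_le.mp ht
    rw [← log_mul (by linarith) (by linarith), show (1 + t) * (1 - t) = 1 - t ^ 2 by ring]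
    exact abs_log_one_sub_le (sq_nonneg t) (by nlinarith)
  have hrecip {j : ℝ} (hj : n / 4 ≤ j) : 1 / (12 * j) ≤ 1 / (3 * n) :=
    one_div_le_one_div_of_le (by positivity) (by linarith)
  have hstirling : |log (n.choose m) - (logStirling n - logStirling m - logStirling ↑(n - m))| ≤
      1 / n := by
    refine (abs_log_choose_sub_logStirling_le hm₀ hmn).trans ?_
    linarith [hrecip (j := m) (by linarith), hrecip (j := ↑(n - m)) (by rw [hbR]; linarith),
      show 1 / (3 * (n : ℝ)) = 1 / n / 3 by field_simp, one_div_pos.mpr hn']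
  set E := log (n.choose m) - (logStirling n - logStirling m - logStirling ↑(n - m)) with hE
  set f := (1 + t) * log (1 + t) + (1 - t) * log (1 - t)
  set L := log (1 + t) + log (1 - t)
  have hsq : (n * t) ^ 2 / (2 * n) = n / 2 * t ^ 2 := by field_simp
  rw [htn]
  calc |log (n.choose m) - (log (2 ^ n * √2 / √(π * n)) - (n * t) ^ 2 / (2 * n))|
      = |E + -(n / 2 * (f - t ^ 2)) + -(L / 2)| := by
        rw [hlogA, hsq, hE]
        congr 1
        linear_combination hsplit
    _ ≤ |E| + n / 2 * |f - t ^ 2| + |L| / 2 := by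
        refine (abs_add_three _ _ _).trans_eq ?_
        rw [abs_neg, abs_neg, abs_mul, abs_div, abs_div, abs_of_pos hn', abs_two]
    _ ≤ 1 / n + n / 2 * (5 * t ^ 4) + 2 * t ^ 2 / 2 := by gcongr
    _ = 1 / n + (n * t) ^ 2 / n ^ 2 + 5 * (n * t) ^ 4 / (2 * n ^ 3) := by field_simp; ring

theorem eventually_log_pow_le_mul_sqrt (d : ℕ) {c : ℝ} (hc : 0 < c) :
    ∀ᶠ x : ℝ in atTop, log x ^ d ≤ c * √x := by
  filter_upwards [(isLittleO_log_rpow_rpow_atTop (d : ℝ) one_half_pos).bound hc,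
    eventually_ge_atTop 0] with x hx hx₀
  rw [rpow_natCast, ← sqrt_eq_rpow, norm_of_nonneg (sqrt_nonneg x)] at hx
  exact (le_abs_self _).trans hx

theorem eventually_gaussian_error_le :
    ∀ᶠ n : ℕ in atTop, ∀ k : ℝ, |k| ≤ √n * log n →
      2 * |k| ≤ n ∧ 1 / n + k ^ 2 / n ^ 2 + 5 * k ^ 4 / (2 * n ^ 3) ≤ (n : ℝ) ^ (-(1 : ℝ) / 2) := by
  filter_upwards [tendsto_natCast_atTop_atTop.eventually
      ((tendsto_log_atTop.eventually_ge_atTop 1).and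
        (eventually_log_pow_le_mul_sqrt 4 (by norm_num : (0 : ℝ) < 1 / 5))),
    eventually_gt_atTop 0] with n ⟨hL₁, hL₄⟩ hn k hk
  have hn' : (0 : ℝ) < n := by exact_mod_cast hn
  set L := log (n : ℝ)
  have hsqrt := mul_self_sqrt hn'.le
  have hL : L ≤ √n / 5 := by nlinarith [le_self_pow₀ hL₁ (by norm_num : 4 ≠ 0)]
  have hk2 : k ^ 2 ≤ n * L ^ 2 := by
    rw [← sq_abs]; nlinarith [abs_nonneg k, sqrt_nonneg (n : ℝ)]
  refine ⟨by nlinarith [sqrt_nonneg (n : ℝ)], ?_⟩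
  have hk4 : k ^ 4 ≤ n ^ 2 * L ^ 4 := by nlinarith [sq_nonneg k]
  rw [neg_div, rpow_neg hn'.le, ← sqrt_eq_rpow, inv_eq_one_div]
  calc 1 / n + k ^ 2 / n ^ 2 + 5 * k ^ 4 / (2 * n ^ 3)
      ≤ 1 / n + n * L ^ 2 / n ^ 2 + 5 * (n ^ 2 * L ^ 4) / (2 * n ^ 3) := by gcongr
    _ = (1 + L ^ 2 + 5 / 2 * L ^ 4) / n := by field_simp
    _ ≤ √n / n := by gcongr; nlinarith [le_self_pow₀ hL₁ (by norm_num : 2 ≠ 0)]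
    _ = 1 / √n := by rw [div_eq_div_iff hn'.ne' (sqrt_pos.mpr hn').ne', one_mul, hsqrt]

theorem stmt9 :
    ∃ N : ℕ, ∀ n : ℕ, N ≤ n → ∀ k : ℤ, ∀ m : ℕ,
      (2 * (m : ℤ) = (n : ℤ) + k) →
      |(k : ℝ)| ≤ Real.sqrt n * Real.log n →
      ∃ ε : ℝ, |ε| ≤ (n : ℝ) ^ (-(1 : ℝ) / 2) ∧
        (n.choose m : ℝ) =
          2 ^ n * Real.sqrt 2 / Real.sqrt (Real.pi * n) *
            Real.exp (-(k : ℝ) ^ 2 / (2 * n) + ε) := by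
  obtain ⟨N, hN⟩ := eventually_atTop.mp (eventually_gaussian_error_le.and (eventually_gt_atTop 0))
  refine ⟨N, fun n hN' k m hm hk ↦ ?_⟩
  obtain ⟨hsmall, hn⟩ := hN n hN'
  obtain ⟨hkn, herror⟩ := hsmall k hk
  have hmn : m ≤ n := by
    have : 2 * (m : ℝ) = n + k := by exact_mod_cast hm
    exact_mod_cast (show (m : ℝ) ≤ n by linarith [le_abs_self (k : ℝ)])
  have hchoose : (0 : ℝ) < n.choose m := by exact_mod_cast Nat.choose_pos hmn
  set A : ℝ := 2 ^ n * √2 / √(π * n)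
  have hA : 0 < A := by positivity
  refine ⟨log (n.choose m) - (log A - (k : ℝ) ^ 2 / (2 * n)),
    (abs_log_choose_sub_gaussian_le hn hm hkn).trans herror, ?_⟩
  rw [show -(k : ℝ) ^ 2 / (2 * n) + (log (n.choose m) - (log A - (k : ℝ) ^ 2 / (2 * n))) =
      log (n.choose m) - log A by ring, exp_sub, exp_log hchoose, exp_log hA]
  field_simp
end
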